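/- Scott's equation fails in the λβ-calculus: B Y₀ ≠β B Y₀ S, where Y₀ is Curry's fpc. -/

import Mathlib

/-- Untyped λ-terms in de Bruijn notation (the variables are `ℕ`). -/
inductive Lam : Type
  | var : ℕ → Lam
  | app : Lam → Lam → Lam
  | abs : Lam → Lam
  deriving DecidableEq

namespace Lam

/-- Shift the free de Bruijn indices `≥ d` up by one. -/
def lift (d : ℕ) : Lam → Lam
  | var n => if n < d then var n else var (n + 1)
  | app s t => app (lift d s) (lift d t)
  | abs t => abs (lift (d + 1) t)

/-- Capture-avoiding substitution `t[k := u]`. -/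
def subst : Lam → ℕ → Lam → Lam
  | var n, k, u => if n < k then var n else if n = k then u else var (n - 1)
  | app s t, k, u => app (subst s k u) (subst t k u)
  | abs t, k, u => abs (subst t (k + 1) (lift 0 u))

/-- One-step β-reduction `→β`: the compatible closure of the β-rule. -/
inductive Beta : Lam → Lam → Prop
  | beta (t u : Lam) : Beta (Lam.app (Lam.abs t) u) (subst t 0 u)
  | appL {s s' : Lam} (t : Lam) : Beta s s' → Beta (Lam.app s t) (Lam.app s' t)
  | appR (s : Lam) {t t' : Lam} : Beta t t' → Beta (Lam.app s t) (Lam.app s t')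
  | abs {t t' : Lam} : Beta t t' → Beta (Lam.abs t) (Lam.abs t')

/-- `↠β`: the reflexive–transitive closure of `→β`. -/
def BetaStar : Lam → Lam → Prop := Relation.ReflTransGen Beta

/-- `→β^k`: the `k`-fold composition of `→β`. -/
def BetaN : ℕ → Lam → Lam → Prop
  | 0, s, t => s = t
  | k + 1, s, t => ∃ u, Beta s u ∧ BetaN k u t

/-- `=β`, β-convertibility: the equivalence closure of `→β`. -/
inductive Conv : Lam → Lam → Prop
  | rel {s t : Lam} : Beta s t → Conv s t
  | refl (s : Lam) : Conv s s
  | symm {s t : Lam} : Conv s t → Conv t s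
  | trans {s t u : Lam} : Conv s t → Conv t u → Conv s u

/-- The free variables of a term (as de Bruijn indices). -/
def FV : Lam → Finset ℕ
  | var n => {n}
  | app s t => FV s ∪ FV t
  | abs t => ((FV t).erase 0).image (· - 1)

/-- `Y` is a fixed point combinator (fpc): `Y x =β x (Y x)` for a variable `x` not free in `Y`. -/
def IsFPC (Y : Lam) : Prop :=
  ∀ x : ℕ, x ∉ FV Y → Conv (app Y (var x)) (app (var x) (app Y (var x)))

/-- `I = λx.x` -/
def combI : Lam := abs (var 0)

/-- `S = λxyz.xz(yz)` -/
def combS : Lam := abs (abs (abs (app (app (var 2) (var 0)) (app (var 1) (var 0)))))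

/-- `B = λxyz.x(yz)` -/
def combB : Lam := abs (abs (abs (app (var 2) (app (var 1) (var 0)))))

/-- `δ = λab.b(ab)` -/
def delta : Lam := abs (abs (app (var 0) (app (var 1) (var 0))))

/-- `η = λxf.f(xxf)` -/
def etaC : Lam := abs (abs (app (var 0) (app (app (var 1) (var 1)) (var 0))))

/-- Curry's fpc `Y₀ = λf.(λx.f(xx))(λx.f(xx))` -/
def curryY : Lam :=
  abs (app (abs (app (var 1) (app (var 0) (var 0))))
    (abs (app (var 1) (app (var 0) (var 0)))))

/-- `A B ⋯ B`: `A` applied to `n` copies of `B`, associating to the left. -/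
def appN (A B : Lam) : ℕ → Lam
  | 0 => A
  | n + 1 => app (appN A B n) B

/-- `M N₁ ⋯ Nₘ`: `M` applied to the terms in `L`, associating to the left. -/
def appList (M : Lam) (L : List Lam) : Lam := L.foldl app M


/-! By Church–Rosser it suffices to show that `B Y₀` and `B Y₀ S` have no common reduct, and both
sets of reducts can be described exactly. Write `Yₙ = λf. fⁿ (W_f W_f)` with `W_f = λx. f (x x)`.
The reducts of `B Y₀` are `B Yₙ`, `λab. Yₙ (a b)` and `λab. (a b)ⁿ (W_{ab} W_{ab})`. A reduct of
`B Y₀ S` is either `M S` with `M` a reduct of `B Y₀`, or an abstraction `λb. …` whose body is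
built from chains of `S b`. When such a body is itself an abstraction, it arose from
`S b g → λz. b z (g z)`, so its spine `(b z) ((b z) (⋯))` ends in an application to the bound `z`,
never in the self-application `W_{ab} W_{ab}`. -/

@[simp] theorem lift_app (d : ℕ) (s t : Lam) : lift d (app s t) = app (lift d s) (lift d t) := rfl

@[simp] theorem lift_abs (d : ℕ) (t : Lam) : lift d (abs t) = abs (lift (d + 1) t) := rfl

@[simp] theorem lift_var_of_lt {n d : ℕ} (h : n < d) : lift d (var n) = var n := by
  simp [lift, h]

@[simp] theorem lift_var_of_le {n d : ℕ} (h : d ≤ n) : lift d (var n) = var (n + 1) := by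
  simp [lift, Nat.not_lt.2 h]

@[simp] theorem subst_app (k : ℕ) (s t u : Lam) :
    subst (app s t) k u = app (subst s k u) (subst t k u) := rfl

@[simp] theorem subst_abs (k : ℕ) (t u : Lam) :
    subst (abs t) k u = abs (subst t (k + 1) (lift 0 u)) := rfl

@[simp] theorem subst_var_of_lt {n k : ℕ} (u : Lam) (h : n < k) : subst (var n) k u = var n := by
  simp [subst, h]

@[simp] theorem subst_var_self (k : ℕ) (u : Lam) : subst (var k) k u = u := by
  simp [subst]

@[simp] theorem subst_var_of_gt {n k : ℕ} (u : Lam) (h : k < n) :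
    subst (var n) k u = var (n - 1) := by
  simp [subst, Nat.not_lt.2 h.le, h.ne']

theorem lift_lift {i j : ℕ} (h : i ≤ j) (t : Lam) :
    lift i (lift j t) = lift (j + 1) (lift i t) := by
  induction t generalizing i j with
  | var n => grind [lift]
  | app s t ihs iht => simp [ihs h, iht h]
  | abs t ih => simp [ih (Nat.succ_le_succ h)]

theorem lift_subst {i k : ℕ} (h : i ≤ k) (t u : Lam) :
    lift i (subst t k u) = subst (lift i t) (k + 1) (lift i u) := by
  induction t generalizing i k u with
  | var n => grind [lift, subst]
  | app s t ihs iht => simp [ihs h, iht h]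
  | abs t ih => simp [ih (Nat.succ_le_succ h), lift_lift (Nat.zero_le i)]

theorem lift_subst_of_le {i k : ℕ} (h : k ≤ i) (t u : Lam) :
    lift i (subst t k u) = subst (lift (i + 1) t) k (lift i u) := by
  induction t generalizing i k u with
  | var n => grind [lift, subst]
  | app s t ihs iht => simp [ihs h, iht h]
  | abs t ih => simp [ih (Nat.succ_le_succ h), lift_lift (Nat.zero_le i)]

@[simp] theorem subst_lift (k : ℕ) (t u : Lam) : subst (lift k t) k u = t := by
  induction t generalizing k u with
  | var n => grind [lift, subst]
  | app s t ihs iht => simp [ihs, iht]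
  | abs t ih => simp [ih]

theorem subst_subst {i k : ℕ} (h : i ≤ k) (t u v : Lam) :
    subst (subst t i u) k v = subst (subst t (k + 1) (lift i v)) i (subst u k v) := by
  induction t generalizing i k u v with
  | var n => grind [lift, subst, subst_lift]
  | app s t ihs iht => simp [ihs h, iht h]
  | abs t ih =>
    simp [ih (Nat.succ_le_succ h), lift_lift (Nat.zero_le i), lift_subst (Nat.zero_le k)]

theorem BetaStar.appL {s s' : Lam} (t : Lam) (h : BetaStar s s') :
    BetaStar (app s t) (app s' t) :=
  Relation.ReflTransGen.lift (app · t) (fun _ _ => Beta.appL t) _ _ h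

theorem BetaStar.appR (s : Lam) {t t' : Lam} (h : BetaStar t t') :
    BetaStar (app s t) (app s t') :=
  Relation.ReflTransGen.lift (app s) (fun _ _ => Beta.appR s) _ _ h

theorem BetaStar.abs {t t' : Lam} (h : BetaStar t t') : BetaStar (abs t) (abs t') :=
  Relation.ReflTransGen.lift Lam.abs (fun _ _ => Beta.abs) _ _ h

theorem BetaStar.preserves {P : Lam → Prop} (hP : ∀ {s t}, P s → Beta s t → P t) {s t : Lam}
    (h : BetaStar s t) (hs : P s) : P t := by
  induction h with
  | refl => exact hs
  | tail _ hst ih => exact hP ih hst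

/-- Parallel reduction. -/
inductive Par : Lam → Lam → Prop
  | var (n : ℕ) : Par (var n) (var n)
  | app {s s' t t' : Lam} : Par s s' → Par t t' → Par (app s t) (app s' t')
  | abs {t t' : Lam} : Par t t' → Par (abs t) (abs t')
  | beta {t t' u u' : Lam} : Par t t' → Par u u' → Par (app (abs t) u) (subst t' 0 u')

theorem Par.refl : ∀ t : Lam, Par t t
  | .var n => .var n
  | .app s t => .app (Par.refl s) (Par.refl t)
  | .abs t => .abs (Par.refl t)

theorem Beta.par {s t : Lam} (h : Beta s t) : Par s t := by
  induction h with
  | beta t u => exact .beta (.refl t) (.refl u)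
  | appL t _ ih => exact .app ih (.refl t)
  | appR s _ ih => exact .app (.refl s) ih
  | abs _ ih => exact .abs ih

theorem Par.betaStar {s t : Lam} (h : Par s t) : BetaStar s t := by
  induction h with
  | var n => exact .refl
  | app _ _ ihs iht => exact (ihs.appL _).trans (iht.appR _)
  | abs _ ih => exact ih.abs
  | beta _ _ iht ihu => exact ((iht.abs.appL _).trans (ihu.appR _)).tail (.beta _ _)

theorem Par.lift {t t' : Lam} (h : Par t t') (d : ℕ) : Par (lift d t) (lift d t') := by
  induction h generalizing d with
  | var n => exact .refl _
  | app _ _ ihs iht => exact .app (ihs d) (iht d)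
  | abs _ ih => exact .abs (ih (d + 1))
  | beta _ _ iht ihu =>
    rw [lift_subst_of_le (Nat.zero_le d)]
    exact .beta (iht (d + 1)) (ihu d)

theorem Par.subst {t t' u u' : Lam} (h : Par t t') (hu : Par u u') (k : ℕ) :
    Par (subst t k u) (subst t' k u') := by
  induction h generalizing u u' k with
  | var n =>
    simp only [Lam.subst]
    split_ifs
    exacts [.refl _, hu, .refl _]
  | app _ _ ihs iht => exact .app (ihs hu k) (iht hu k)
  | abs _ ih => exact .abs (ih (hu.lift 0) (k + 1))
  | beta _ _ iht ihu =>
    rw [subst_subst (Nat.zero_le k)]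
    exact .beta (iht (hu.lift 0) (k + 1)) (ihu hu k)

/-- Complete development, the largest parallel reduct (Takahashi). -/
def cd : Lam → Lam
  | var n => var n
  | abs t => abs (cd t)
  | app (abs s) t => subst (cd s) 0 (cd t)
  | app s t => app (cd s) (cd t)

theorem Par.par_cd {t s : Lam} (h : Par t s) : Par s (cd t) := by
  induction h with
  | var n => exact .var n
  | abs _ ih => exact .abs ih
  | beta _ _ iht ihu => exact iht.subst ihu 0
  | app ha _ iha ihb =>
    cases ha with
    | var => exact .app iha ihb
    | app => exact .app iha ihb
    | abs => cases iha with
      | abs h => exact .beta h ihb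
    | beta => exact .app iha ihb

theorem reflTransGen_par_eq_betaStar : Relation.ReflTransGen Par = BetaStar :=
  le_antisymm (Relation.reflTransGen_closed fun _ _ => Par.betaStar)
    (Relation.ReflTransGen.mono fun _ _ => Beta.par)

theorem equivalence_join_betaStar : Equivalence (Relation.Join BetaStar) := by
  rw [← reflTransGen_par_eq_betaStar]
  exact Relation.equivalence_join_reflTransGen fun a _ _ hb hc =>
    ⟨cd a, .single hb.par_cd, .single hc.par_cd⟩

/-- The Church–Rosser theorem. -/
theorem Conv.join_betaStar {s t : Lam} (h : Conv s t) : Relation.Join BetaStar s t := by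
  induction h with
  | rel h => exact ⟨_, .single h, .refl⟩
  | refl s => exact equivalence_join_betaStar.refl s
  | symm _ ih => exact equivalence_join_betaStar.symm ih
  | trans _ _ ih₁ ih₂ => exact equivalence_join_betaStar.trans ih₁ ih₂

theorem not_conv_of_invariants {P Q : Lam → Prop} (hP : ∀ {s t}, P s → Beta s t → P t)
    (hQ : ∀ {s t}, Q s → Beta s t → Q t) (hPQ : ∀ {t}, P t → ¬ Q t) {s t : Lam}
    (hs : P s) (ht : Q t) : ¬ Conv s t := fun h =>
  let ⟨_, hsu, htu⟩ := h.join_betaStar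
  hPQ (hsu.preserves hP hs) (htu.preserves hQ ht)

def isAbs : Lam → Bool
  | var _ => false
  | app _ _ => false
  | abs _ => true

attribute [simp] isAbs.eq_1 isAbs.eq_2 isAbs.eq_3

@[simp] def hasRedex : Lam → Bool
  | var _ => false
  | app s t => isAbs s || hasRedex s || hasRedex t
  | abs t => hasRedex t

theorem Beta.hasRedex {t u : Lam} (h : Beta t u) : hasRedex t = true := by
  induction h <;> simp_all

@[simp] theorem isAbs_lift (d : ℕ) (t : Lam) : isAbs (lift d t) = isAbs t := by
  cases t <;> simp [lift]; split_ifs <;> rfl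

@[simp] theorem hasRedex_lift (d : ℕ) (t : Lam) : hasRedex (lift d t) = hasRedex t := by
  induction t generalizing d with
  | var n => simp [lift]; split_ifs <;> rfl
  | app s t ihs iht => simp [ihs, iht]
  | abs t ih => simp [ih]

def appIter (f a : Lam) : ℕ → Lam
  | 0 => a
  | n + 1 => app f (appIter f a n)

@[simp] theorem lift_appIter (d : ℕ) (f a : Lam) (n : ℕ) :
    lift d (appIter f a n) = appIter (lift d f) (lift d a) n := by
  induction n <;> simp [appIter, *]

@[simp] theorem subst_appIter (k : ℕ) (f a u : Lam) (n : ℕ) :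
    subst (appIter f a n) k u = appIter (subst f k u) (subst a k u) n := by
  induction n <;> simp [appIter, *]

/-- `W_f = λx. f (x x)`, so that `Y₀ = λf. W_f W_f`. -/
def curryW (f : Lam) : Lam := abs (app (lift 0 f) (app (var 0) (var 0)))

/-- `fⁿ (W_f W_f)`, the `n`-th reduct of `W_f W_f`. -/
def curryIter (f : Lam) (n : ℕ) : Lam := appIter f (app (curryW f) (curryW f)) n

/-- `Yₙ = λf. fⁿ (W_f W_f)`. -/
def curryYn (n : ℕ) : Lam := abs (curryIter (var 0) n)

theorem curryYn_zero : curryYn 0 = curryY := rfl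

@[simp] theorem lift_curryIter (d : ℕ) (f : Lam) (n : ℕ) :
    lift d (curryIter f n) = curryIter (lift d f) n := by
  simp [curryIter, curryW, lift_lift (Nat.zero_le d)]

@[simp] theorem subst_curryIter (k : ℕ) (f u : Lam) (n : ℕ) :
    subst (curryIter f n) k u = curryIter (subst f k u) n := by
  simp [curryIter, curryW, lift_subst (Nat.zero_le k)]

@[simp] theorem lift_curryYn (d n : ℕ) : lift d (curryYn n) = curryYn n := by
  simp [curryYn]

@[simp] theorem subst_curryYn (k n : ℕ) (u : Lam) : subst (curryYn n) k u = curryYn n := by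
  simp [curryYn]

theorem curryIter_ne_abs (f t : Lam) (n : ℕ) : curryIter f n ≠ abs t := by
  cases n <;> simp [curryIter, appIter]

theorem curryIter_step {f r : Lam} (hf : hasRedex f = false) (hf' : isAbs f = false) {n : ℕ}
    (h : Beta (curryIter f n) r) : r = curryIter f (n + 1) := by
  induction n generalizing r with
  | zero =>
    simp only [curryIter, appIter, curryW] at h
    cases h with
    | beta => simp [curryIter, appIter, curryW]
    | appL _ h => simpa [hf, hf'] using h.hasRedex
    | appR _ h => simpa [hf, hf'] using h.hasRedex
  | succ n ih =>
    simp only [curryIter, appIter] at h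
    cases h with
    | beta => simp at hf'
    | appL _ h => simpa [hf] using h.hasRedex
    | appR _ h => rw [ih h]; rfl

theorem curryYn_step {n : ℕ} {r : Lam} (h : Beta (curryYn n) r) : r = curryYn (n + 1) := by
  cases h with
  | abs h => rw [curryIter_step rfl rfl h]; rfl

inductive BYReduct : Lam → Prop
  | applied (n : ℕ) : BYReduct (app combB (curryYn n))
  | lam_redex (n : ℕ) : BYReduct (abs (abs (app (curryYn n) (app (var 1) (var 0)))))
  | lam_iter (n : ℕ) : BYReduct (abs (abs (curryIter (app (var 1) (var 0)) n)))

theorem BYReduct.step {t t' : Lam} (h : BYReduct t) (hb : Beta t t') : BYReduct t' := by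
  cases h with
  | applied n =>
    cases hb with
    | beta => simpa [combB] using BYReduct.lam_redex n
    | appL _ h => simpa [combB] using h.hasRedex
    | appR _ h => rw [curryYn_step h]; exact .applied _
  | lam_redex n =>
    cases hb with | abs hb => cases hb with | abs hb => cases hb with
    | beta => simpa using BYReduct.lam_iter n
    | appL _ h => rw [curryYn_step h]; exact .lam_redex _
    | appR _ h => simpa using h.hasRedex
  | lam_iter n =>
    cases hb with | abs hb => cases hb with | abs hb =>
    rw [curryIter_step rfl rfl hb]
    exact .lam_iter _

@[simp] theorem lift_combS (d : ℕ) : lift d combS = combS := by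
  simp (disch := omega) [combS]

@[simp] theorem subst_combS (k : ℕ) (u : Lam) : subst combS k u = combS := by
  simp (disch := omega) [combS]

/-- The reducts of `S b` for the free variable `b = var z`. -/
inductive SReduct (z : ℕ) : Lam → Prop
  | applied : SReduct z (app combS (var z))
  | lam : SReduct z (abs (abs (app (app (var (z + 2)) (var 0)) (app (var 1) (var 0)))))

/-- The reducts of `W_{S b} = λx. S b (x x)` for `b = var z`. -/
inductive WReduct (z : ℕ) : Lam → Prop
  | lam_app {x : Lam} : SReduct (z + 1) x → WReduct z (abs (app x (app (var 0) (var 0))))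
  | lam_lam :
      WReduct z (abs (abs (app (app (var (z + 2)) (var 0)) (app (app (var 1) (var 1)) (var 0)))))

/-- `(b v)ᵏ (g v)` for `b = var z` and `v = var 0`. -/
def spine (z : ℕ) (g : Lam) (k : ℕ) : Lam := appIter (app (var z) (var 0)) (app g (var 0)) k

/-- Terms reachable from `(S b)ⁿ (W_{S b} W_{S b})` for `b = var z`. Contracting `S b g` gives
`λv. b v (g v)`, and contracting `g v` when `g` is such an abstraction gives `λv. (b v)ᵏ (g' v)`. -/
inductive SChain : ℕ → Lam → Prop
  | cons {z : ℕ} {x g : Lam} : SReduct z x → SChain z g → SChain z (app x g)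
  | selfApp {z : ℕ} {w w' : Lam} : WReduct z w → WReduct z w' → SChain z (app w w')
  | lam {z : ℕ} {g : Lam} (k : ℕ) :
      SChain (z + 1) g → SChain z (abs (spine (z + 1) g k))

section Shifting

variable {z d : ℕ}

theorem SReduct.lift {x : Lam} (h : SReduct z x) (hd : d ≤ z) : SReduct (z + 1) (lift d x) := by
  cases h with
  | applied => simpa (disch := omega) using SReduct.applied
  | lam => simpa (disch := omega) using SReduct.lam

theorem SReduct.subst {x : Lam} (h : SReduct (z + 1) x) (hd : d ≤ z) (u : Lam) :
    SReduct z (subst x d u) := by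
  cases h with
  | applied => simpa (disch := omega) using SReduct.applied
  | lam => simpa (disch := omega) using SReduct.lam

theorem WReduct.lift {w : Lam} (h : WReduct z w) (hd : d ≤ z) : WReduct (z + 1) (lift d w) := by
  cases h with
  | lam_app hx => simpa using WReduct.lam_app (hx.lift (Nat.succ_le_succ hd))
  | lam_lam => simpa (disch := omega) using WReduct.lam_lam

theorem WReduct.subst {w : Lam} (h : WReduct (z + 1) w) (hd : d ≤ z) (u : Lam) :
    WReduct z (subst w d u) := by
  cases h with
  | lam_app hx => simpa using WReduct.lam_app (hx.subst (Nat.succ_le_succ hd) (Lam.lift 0 u))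
  | lam_lam => simpa (disch := omega) using WReduct.lam_lam

theorem SChain.lift {g : Lam} (h : SChain z g) (hd : d ≤ z) : SChain (z + 1) (lift d g) := by
  induction h generalizing d with
  | cons hx _ ih => exact .cons (hx.lift hd) (ih hd)
  | selfApp hw hw' => exact .selfApp (hw.lift hd) (hw'.lift hd)
  | lam k _ ih => simpa (disch := omega) [spine] using SChain.lam k (ih (Nat.succ_le_succ hd))

theorem SChain.subst {g : Lam} (h : SChain (z + 1) g) (hd : d ≤ z) (u : Lam) :
    SChain z (subst g d u) := by
  generalize hz : z + 1 = z' at h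
  induction h generalizing z d u with
  | cons hx _ ih => subst hz; exact .cons (hx.subst hd u) (ih hd u rfl)
  | selfApp hw hw' => subst hz; exact .selfApp (hw.subst hd u) (hw'.subst hd u)
  | lam k _ ih =>
    subst hz
    simpa (disch := omega) [spine] using
      SChain.lam k (ih (Nat.succ_le_succ hd) (Lam.lift 0 u) rfl)

end Shifting

theorem SReduct.step {z : ℕ} {x x' : Lam} (h : SReduct z x) (hb : Beta x x') : SReduct z x' := by
  cases h with
  | applied =>
    cases hb with
    | beta => simpa (disch := omega) using SReduct.lam
    | appL _ h => simpa [combS] using h.hasRedex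
    | appR _ h => simpa using h.hasRedex
  | lam => simpa using hb.hasRedex

theorem WReduct.step {z : ℕ} {w w' : Lam} (h : WReduct z w) (hb : Beta w w') : WReduct z w' := by
  cases h with
  | lam_app hx =>
    cases hb with | abs hb => cases hb with
    | beta => cases hx; simpa (disch := omega) using WReduct.lam_lam
    | appL _ h => exact .lam_app (hx.step h)
    | appR _ h => simpa using h.hasRedex
  | lam_lam => simpa using hb.hasRedex

theorem SChain.eq_spine_of_abs {z : ℕ} {t : Lam} (h : SChain z (abs t)) :
    ∃ g k, t = spine (z + 1) g k := by
  cases h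
  exact ⟨_, _, rfl⟩

theorem SChain.spine_step {z : ℕ} {g : Lam} (hg : SChain (z + 1) g)
    (hstep : ∀ {g'}, Beta g g' → SChain (z + 1) g') {k : ℕ} {r : Lam}
    (h : Beta (spine (z + 1) g k) r) : ∃ g' k', SChain (z + 1) g' ∧ r = spine (z + 1) g' k' := by
  induction k generalizing r with
  | zero =>
    cases h with
    | beta =>
      cases hg with
      | lam k hg' =>
        exact ⟨_, k, hg'.subst (Nat.zero_le _) (var 0), by simp (disch := omega) [spine]⟩
    | appL _ h => exact ⟨_, 0, hstep h, rfl⟩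
    | appR _ h => simpa using h.hasRedex
  | succ k ihk =>
    cases h with
    | appL _ h => simpa using h.hasRedex
    | appR _ h =>
      obtain ⟨g', k', hg', rfl⟩ := ihk h
      exact ⟨g', k' + 1, hg', rfl⟩

theorem SChain.step {z : ℕ} {g g' : Lam} (h : SChain z g) (hb : Beta g g') : SChain z g' := by
  induction h generalizing g' with
  | cons hx hg ih =>
    cases hb with
    | beta =>
      cases hx
      simpa (disch := omega) [spine, appIter] using SChain.lam 1 (hg.lift (Nat.zero_le _))
    | appL _ h => exact .cons (hx.step h) hg
    | appR _ h => exact .cons hx (ih h)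
  | selfApp hw hw' =>
    cases hb with
    | beta =>
      cases hw with
      | lam_app hx => simpa using SChain.cons (hx.subst (Nat.zero_le _) _) (.selfApp hw' hw')
      | lam_lam =>
        simpa (disch := omega) [spine, appIter] using
          SChain.lam 1 (.selfApp (hw'.lift (Nat.zero_le _)) (hw'.lift (Nat.zero_le _)))
    | appL _ h => exact .selfApp (hw.step h) hw'
    | appR _ h => exact .selfApp hw (hw'.step h)
  | lam k hg ih =>
    cases hb with
    | abs h =>
      obtain ⟨g'', k', hg'', rfl⟩ := hg.spine_step ih h
      exact .lam k' hg''

theorem SChain.curryIter {z : ℕ} {x : Lam} (hx : SReduct z x) (n : ℕ) :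
    SChain z (curryIter x n) := by
  induction n with
  | zero => exact .selfApp (.lam_app (hx.lift (Nat.zero_le z))) (.lam_app (hx.lift (Nat.zero_le z)))
  | succ n ih => exact .cons hx ih

inductive BYSReduct : Lam → Prop
  | applied {m : Lam} : BYReduct m → BYSReduct (app m combS)
  | lam_redex (n : ℕ) {x : Lam} : SReduct 0 x → BYSReduct (abs (app (curryYn n) x))
  | lam {g : Lam} : SChain 0 g → BYSReduct (abs g)

theorem BYSReduct.step {t t' : Lam} (h : BYSReduct t) (hb : Beta t t') : BYSReduct t' := by
  cases h with
  | applied hm =>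
    cases hb with
    | beta =>
      cases hm with
      | lam_redex n => simpa using BYSReduct.lam_redex n .applied
      | lam_iter n => simpa using BYSReduct.lam (.curryIter .applied n)
    | appL _ h => exact .applied (hm.step h)
    | appR _ h => simpa [combS] using h.hasRedex
  | lam_redex n hx =>
    cases hb with | abs hb => cases hb with
    | beta => simpa using BYSReduct.lam (.curryIter hx n)
    | appL _ h => rw [curryYn_step h]; exact .lam_redex _ hx
    | appR _ h => exact .lam_redex n (hx.step h)
  | lam hg =>
    cases hb with
    | abs h => exact .lam (hg.step h)

theorem BYSReduct.eq_combS_of_app {s t : Lam} (h : BYSReduct (app s t)) : t = combS := by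
  cases h
  rfl

theorem curryIter_ne_spine (f g : Lam) (n k : ℕ) : curryIter f n ≠ spine 1 g k := by
  induction n generalizing k with
  | zero => cases k <;> simp [curryIter, curryW, spine, appIter]
  | succ n ih =>
    cases k with
    | zero => cases n <;> simp [curryIter, spine, appIter]
    | succ k => exact fun h => ih k (Lam.app.inj h).2

theorem BYReduct.not_bysReduct {t : Lam} (hM : BYReduct t) : ¬ BYSReduct t := by
  intro hN
  cases hM with
  | applied n => exact curryIter_ne_abs _ _ n (Lam.abs.inj hN.eq_combS_of_app)
  | lam_redex n =>
    rcases hN with _ | _ | hg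
    obtain ⟨g, k, h⟩ := hg.eq_spine_of_abs
    cases k <;> simp [spine, appIter, curryYn] at h
  | lam_iter n =>
    rcases hN with _ | _ | hg
    obtain ⟨g, k, h⟩ := hg.eq_spine_of_abs
    exact curryIter_ne_spine _ _ n k h

/-- Scott's equation fails in the λβ-calculus: `B Y₀ ≠β B Y₀ S`. -/
theorem scott_equation_fails :
    ¬ Conv (app combB curryY) (app (app combB curryY) combS) := by
  rw [← curryYn_zero]
  exact not_conv_of_invariants BYReduct.step BYSReduct.step BYReduct.not_bysReduct
    (.applied 0) (.applied (.applied 0))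

end Lam
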